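/- arXiv:2304.07518 — 2 statements merged into one kernel-verified Lean document; each statement's English description precedes it below -/
import Mathlib

section
/- Let V and W be vector spaces over ℂ, let λ ∈ ℂ, and let A, P, D : V → V and R : V → W be linear maps satisfying P ∘ P = P, D = (A - λ·id) ∘ P, and D ∘ P = P ∘ D. Assume the unique continuation property: for every v ∈ V, if (A - λ·id) v = 0 and R v = 0 then v = 0. Let a ∈ V and let d ≥ 1 be a natural number such that D^{d}(P a) = 0 and R(D^{ℓ}(P a)) = 0 for every natural number ℓ with 0 ≤ ℓ ≤ d - 1. Then P a = 0. -/
/-- Algebraic core of the Second Step of the proof of Theorem 1: if `P` is a projection,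
`D = (A - λ·id)P`, `D` and `P` commute, `A - λ·id` has the unique continuation property
relative to the observation map `R`, `D^d(Pa) = 0`, and `R(D^ℓ(Pa)) = 0` for every
`0 ≤ ℓ ≤ d - 1`, then `Pa = 0`. -/
theorem stmt_1 {V W : Type*} [AddCommGroup V] [Module ℂ V] [AddCommGroup W] [Module ℂ W]
    (A P D : Module.End ℂ V) (R : V →ₗ[ℂ] W) (lam : ℂ)
    (hP : P ∘ₗ P = P)
    (hD : D = (A - lam • (LinearMap.id : Module.End ℂ V)) ∘ₗ P)
    (hDP : D ∘ₗ P = P ∘ₗ D)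
    (hUCP : ∀ v : V, (A - lam • (LinearMap.id : Module.End ℂ V)) v = 0 → R v = 0 → v = 0)
    (a : V) (d : ℕ) (hd : 1 ≤ d)
    (hDd : (D ^ d) (P a) = 0)
    (hR : ∀ ℓ : ℕ, ℓ ≤ d - 1 → R ((D ^ ℓ) (P a)) = 0) :
    P a = 0 := by
  -- D^n ∘ P = P ∘ D^n
  have hpow : ∀ n : ℕ, (D ^ n) ∘ₗ P = P ∘ₗ (D ^ n) := by
    intro n
    induction n with
    | zero => simp [pow_zero, Module.End.one_eq_id]
    | succ n ih =>
      calc (D ^ (n+1)) ∘ₗ P = D ∘ₗ ((D ^ n) ∘ₗ P) := by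
            rw [pow_succ']; rfl
        _ = D ∘ₗ (P ∘ₗ (D ^ n)) := by rw [ih]
        _ = (D ∘ₗ P) ∘ₗ (D ^ n) := by rfl
        _ = (P ∘ₗ D) ∘ₗ (D ^ n) := by rw [hDP]
        _ = P ∘ₗ (D ^ (n+1)) := by rw [pow_succ']; rfl
  have key : ∀ k : ℕ, k ≤ d → (D ^ (d - k)) (P a) = 0 := by
    intro k
    induction k with
    | zero => intro _; simpa using hDd
    | succ k ih =>
      intro hk
      have hk' : k ≤ d := Nat.le_of_succ_le hk
      have ihk := ih hk'
      set n := d - (k + 1) with hn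
      have hnk : n + 1 = d - k := by omega
      set v := (D ^ n) (P a) with hv
      have hPv : P v = v := by
        have h1 : P ((D ^ n) (P a)) = (D ^ n) (P (P a)) := by
          have := congrArg (fun f => f (P a)) (hpow n)
          simpa using this.symm
        have h2 : P (P a) = P a := by
          have := congrArg (fun f => f a) hP
          simpa using this
        simp [hv, h1, h2]
      have hDv : D v = 0 := by
        have : D ((D ^ n) (P a)) = (D ^ (n + 1)) (P a) := by
          rw [pow_succ']; rfl
        rw [hv, this, hnk, ihk]
      have hAv : (A - lam • (LinearMap.id : Module.End ℂ V)) v = 0 := by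
        have : (A - lam • (LinearMap.id : Module.End ℂ V)) (P v) = D v := by
          rw [hD]; rfl
        rw [hPv] at this
        rw [this, hDv]
      have hRv : R v = 0 := hR n (by omega)
      exact hUCP v hAv hRv
  have := key d le_rfl
  simpa using this
end

section
/- Let α ∈ ℝ with 1 < α < 2, let q₀ > 0, and let S ⊆ ℂ be a closed set consisting only of isolated points (a closed discrete set) with S ⊆ {z ∈ ℂ : Re z ≥ q₀}. Let f, g : ℂ → ℂ be complex-differentiable at every point of ℂ ∖ S, and suppose that (-η)^{1/α} · f(η) = -g(η) for every η ∈ ℂ with Re η < 0, where w^{1/α} denotes the principal branch of the complex power. Then f(z) = 0 and g(z) = 0 for every z ∈ ℂ ∖ S. -/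
open Complex Filter Set Topology
open scoped Real

/-! Put `c = 1/α`. Off the cut `(-∞, 0]` the branch `z ^ c` is holomorphic, and above (resp. below)
the real axis `(-z) ^ c = e^{∓iπc} z ^ c`. So `e^{∓iπc} z ^ c f z + g z` is holomorphic on the
connected domain `{Re z < q₀} ∖ (-∞, 0]` and vanishes on its upper (resp. lower) left quadrant,
hence on all of it. As `c ∉ ℤ`, `e^{iπc} ≠ e^{-iπc}`, and subtracting the two identities gives
`f = 0`, then `g = 0`, on that domain. A discrete subset of `ℂ` is countable, so `ℂ ∖ S` is
connected and the identity theorem spreads the vanishing to all of it. -/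

theorem Set.countable_of_forall_exists_nhds_inter_eq_singleton {X : Type*} [TopologicalSpace X]
    [HereditarilyLindelofSpace X] {S : Set X} (hS : ∀ s ∈ S, ∃ U ∈ 𝓝 s, U ∩ S = {s}) :
    S.Countable := by
  refine (HereditarilyLindelofSpace.isLindelof S).countable_of_isDiscrete ?_
  refine isDiscrete_iff_forall_mem_exists_isOpen.2 fun s hs ↦ ?_
  obtain ⟨U, hU, hUS⟩ := hS s hs
  refine ⟨interior U, isOpen_interior, subset_antisymm ?_ ?_⟩
  · exact hUS ▸ inter_subset_inter_left S interior_subset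
  · simpa [hs] using mem_interior_iff_mem_nhds.2 hU

namespace Complex

theorem log_neg_of_im_pos {z : ℂ} (hz : 0 < z.im) : log (-z) = log z - π * I := by
  apply ext <;> simp [log_re, log_im, arg_neg_eq_arg_sub_pi_of_im_pos hz]

theorem log_neg_of_im_neg {z : ℂ} (hz : z.im < 0) : log (-z) = log z + π * I := by
  apply ext <;> simp [log_re, log_im, arg_neg_eq_arg_add_pi_of_im_neg hz]

theorem neg_cpow_of_im_pos {z : ℂ} (hz : 0 < z.im) (c : ℂ) :
    (-z) ^ c = exp (-(π * I * c)) * z ^ c := by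
  have hz0 : z ≠ 0 := fun h ↦ by simp [h] at hz
  rw [cpow_def_of_ne_zero (neg_ne_zero.2 hz0), cpow_def_of_ne_zero hz0, ← exp_add,
    log_neg_of_im_pos hz]
  ring_nf

theorem neg_cpow_of_im_neg {z : ℂ} (hz : z.im < 0) (c : ℂ) :
    (-z) ^ c = exp (π * I * c) * z ^ c := by
  have hz0 : z ≠ 0 := fun h ↦ by simp [h] at hz
  rw [cpow_def_of_ne_zero (neg_ne_zero.2 hz0), cpow_def_of_ne_zero hz0, ← exp_add,
    log_neg_of_im_neg hz]
  ring_nf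

theorem exp_pi_mul_I_mul_ne_exp_neg {c : ℂ} (hc : ∀ n : ℤ, c ≠ n) :
    exp (π * I * c) ≠ exp (-(π * I * c)) := by
  rw [Ne, exp_eq_exp_iff_exists_int]
  rintro ⟨n, hn⟩
  refine hc n (mul_left_cancel₀ (by simp [Real.pi_ne_zero] : (2 * π * I : ℂ) ≠ 0) ?_)
  linear_combination hn

theorem isPreconnected_setOf_re_lt_inter_slitPlane {q : ℝ} (hq : 0 < q) :
    IsPreconnected ({z : ℂ | z.re < q} ∩ slitPlane) := by
  have hmem : ((q / 2 : ℝ) : ℂ) ∈ {z : ℂ | z.re < q} ∩ slitPlane :=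
    ⟨by simpa using half_lt_self hq, ofReal_mem_slitPlane.2 (by positivity)⟩
  exact ((((convex_halfSpace_re_lt q).starConvex hmem.1).inter
    (starConvex_ofReal_slitPlane (by positivity))).isPathConnected hmem).isConnected.isPreconnected

theorem eqOn_zero_of_neg_cpow_mul_eq_neg {q : ℝ} (hq : 0 < q) {c : ℂ} (hc : ∀ n : ℤ, c ≠ n)
    {f g : ℂ → ℂ} (hf : DifferentiableOn ℂ f ({z | z.re < q} ∩ slitPlane))
    (hg : DifferentiableOn ℂ g ({z | z.re < q} ∩ slitPlane))
    (heq : ∀ η : ℂ, η.re < 0 → (-η) ^ c * f η = -g η) :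
    EqOn f 0 ({z | z.re < q} ∩ slitPlane) ∧ EqOn g 0 ({z | z.re < q} ∩ slitPlane) := by
  set D := {z : ℂ | z.re < q} ∩ slitPlane
  have hDo : IsOpen D := (isOpen_lt continuous_re continuous_const).inter isOpen_slitPlane
  have branch (w z₀ : ℂ) (hre : z₀.re < 0) (him : z₀.im ≠ 0)
      (h0 : ∀ᶠ z in 𝓝 z₀, w * z ^ c * f z + g z = 0) : ∀ z ∈ D, w * z ^ c * f z + g z = 0 := by
    have hd : DifferentiableOn ℂ (fun z ↦ w * z ^ c * f z + g z) D := fun z hz ↦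
      ((((differentiableAt_id.cpow_const hz.2).const_mul w).differentiableWithinAt).mul
        (hf z hz)).add (hg z hz)
    exact (hd.analyticOnNhd hDo).eqOn_zero_of_preconnected_of_eventuallyEq_zero
      (isPreconnected_setOf_re_lt_inter_slitPlane hq)
      ⟨hre.trans hq, mem_slitPlane_iff.2 (.inr him)⟩ h0
  have upper := branch (exp (-(π * I * c))) (-1 + I) (by simp) (by simp) <| by
    filter_upwards [continuous_re.continuousAt.eventually_lt continuousAt_const
        (by simp : (-1 + I).re < 0),
      continuousAt_const.eventually_lt continuous_im.continuousAt
        (by simp : (0 : ℝ) < (-1 + I).im)] with z hre him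
    rw [← neg_cpow_of_im_pos him, heq z hre, neg_add_cancel]
  have lower := branch (exp (π * I * c)) (-1 - I) (by simp) (by simp) <| by
    filter_upwards [continuous_re.continuousAt.eventually_lt continuousAt_const
        (by simp : (-1 - I).re < 0),
      continuous_im.continuousAt.eventually_lt continuousAt_const
        (by simp : (-1 - I).im < 0)] with z hre him
    rw [← neg_cpow_of_im_neg him, heq z hre, neg_add_cancel]
  have hf0 : EqOn f 0 D := fun z hz ↦ by
    have hdiff : (exp (π * I * c) - exp (-(π * I * c))) * z ^ c * f z = 0 := by
      linear_combination lower z hz - upper z hz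
    simpa [sub_ne_zero.2 (exp_pi_mul_I_mul_ne_exp_neg hc), slitPlane_ne_zero hz.2] using hdiff
  exact ⟨hf0, fun z hz ↦ by simpa [hf0 hz] using upper z hz⟩

end Complex

theorem Set.Countable.eqOn_compl_zero_of_eventuallyEq_zero {E : Type*} [NormedAddCommGroup E]
    [NormedSpace ℂ E] [CompleteSpace E] {S : Set ℂ} (hS : S.Countable) (hSc : IsClosed S)
    {h : ℂ → E} (hh : ∀ z ∉ S, DifferentiableAt ℂ h z) {z₀ : ℂ} (hz₀ : z₀ ∉ S)
    (h0 : h =ᶠ[𝓝 z₀] 0) : EqOn h 0 Sᶜ :=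
  (DifferentiableOn.analyticOnNhd (fun z hz ↦ (hh z hz).differentiableWithinAt)
    hSc.isOpen_compl).eqOn_zero_of_preconnected_of_eventuallyEq_zero
    (hS.isConnected_compl_of_one_lt_rank (by simp)).isPreconnected hz₀ h0

theorem stmt_2_general (α : ℝ) (hα1 : 1 < α) (q₀ : ℝ) (hq₀ : 0 < q₀)
    (S : Set ℂ) (hSclosed : IsClosed S)
    (hSdisc : ∀ s ∈ S, ∃ U ∈ nhds s, U ∩ S = {s})
    (hSre : S ⊆ {z : ℂ | q₀ ≤ z.re})
    (f g : ℂ → ℂ)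
    (hf : ∀ z ∉ S, DifferentiableAt ℂ f z)
    (hg : ∀ z ∉ S, DifferentiableAt ℂ g z)
    (heq : ∀ η : ℂ, η.re < 0 → (-η) ^ ((1 / α : ℝ) : ℂ) * f η = -g η) :
    ∀ z ∉ S, f z = 0 ∧ g z = 0 := by
  have hc : ∀ n : ℤ, ((1 / α : ℝ) : ℂ) ≠ n := fun n hn ↦ by
    have hn' : (1 / α : ℝ) = n := by exact_mod_cast hn
    have h0 : (0 : ℤ) < n := by exact_mod_cast hn' ▸ (by positivity : (0 : ℝ) < 1 / α)
    have h1 : n < 1 := by exact_mod_cast hn' ▸ (div_lt_one (by linarith)).2 hα1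
    omega
  set D := {z : ℂ | z.re < q₀} ∩ slitPlane
  have hDS : D ⊆ Sᶜ := fun z hz hzS ↦ (show q₀ ≤ z.re from hSre hzS).not_gt hz.1
  have hDo : IsOpen D := (isOpen_lt continuous_re continuous_const).inter isOpen_slitPlane
  have hID : I ∈ D := ⟨by simpa using hq₀, by simp [mem_slitPlane_iff]⟩
  obtain ⟨hfD, hgD⟩ := eqOn_zero_of_neg_cpow_mul_eq_neg hq₀ hc
    (fun z hz ↦ (hf z (hDS hz)).differentiableWithinAt)
    (fun z hz ↦ (hg z (hDS hz)).differentiableWithinAt) heq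
  have hS := countable_of_forall_exists_nhds_inter_eq_singleton hSdisc
  have extend (h : ℂ → ℂ) (hh : ∀ z ∉ S, DifferentiableAt ℂ h z) (hD : EqOn h 0 D) :
      EqOn h 0 Sᶜ :=
    hS.eqOn_compl_zero_of_eventuallyEq_zero hSclosed hh (hDS hID)
      (eventuallyEq_of_mem (hDo.mem_nhds hID) hD)
  exact fun z hz ↦ ⟨extend f hf hfD hz, extend g hg hgD hz⟩

/-- Claim (3.2) in the proof of Theorem 1: if `f, g` are holomorphic outside a closed
discrete set `S` contained in `{Re z ≥ q₀}` with `q₀ > 0`, and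
`(-η)^{1/α} f(η) = -g(η)` for all `η` with `Re η < 0`, then `f = g = 0` off `S`. -/
theorem stmt_2 (α : ℝ) (hα1 : 1 < α) (hα2 : α < 2) (q₀ : ℝ) (hq₀ : 0 < q₀)
    (S : Set ℂ) (hSclosed : IsClosed S)
    (hSdisc : ∀ s ∈ S, ∃ U ∈ nhds s, U ∩ S = {s})
    (hSre : S ⊆ {z : ℂ | q₀ ≤ z.re})
    (f g : ℂ → ℂ)
    (hf : ∀ z ∉ S, DifferentiableAt ℂ f z)
    (hg : ∀ z ∉ S, DifferentiableAt ℂ g z)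
    (heq : ∀ η : ℂ, η.re < 0 → (-η) ^ ((1 / α : ℝ) : ℂ) * f η = -g η) :
    ∀ z ∉ S, f z = 0 ∧ g z = 0 :=
  stmt_2_general α hα1 q₀ hq₀ S hSclosed hSdisc hSre f g hf hg heq
end
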